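/- If two Pauli strings u, v in a commuting family satisfy u ≠ v but have the same X-part (u^x = v^x), then φ(u ⊕ v) is a nonidentity element of {I,Z}^{⊗n}. Consequently, if a maximally commuting family G (with I^{⊗n}, |G| = 2ⁿ) is disjoint from {I,Z}^{⊗n}∖{I^{⊗n}}, then the map u ↦ u^x restricted to φ⁻¹(G) is injective, hence a linear bijection onto {0,1}ⁿ. -/

import Mathlib

open Matrix

/-- The 2×2 Pauli `X` matrix, indexed by `ZMod 2`. -/
noncomputable def pauliX : Matrix (ZMod 2) (ZMod 2) ℂ :=
  fun a b => if a = b + 1 then 1 else 0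

/-- The 2×2 Pauli `Y` matrix (`Y = −iZX`), indexed by `ZMod 2`. -/
noncomputable def pauliY : Matrix (ZMod 2) (ZMod 2) ℂ :=
  fun a b => if a = b + 1 then Complex.I * (-1 : ℂ) ^ (b.val) else 0

/-- The 2×2 Pauli `Z` matrix, indexed by `ZMod 2`. -/
noncomputable def pauliZ : Matrix (ZMod 2) (ZMod 2) ℂ :=
  fun a b => if a = b then (-1 : ℂ) ^ (a.val) else 0

/-- The single-qubit operator `(−i)^{zx} Z^z X^x` for `z, x ∈ {0,1}`. -/
noncomputable def singleZX (z x : ZMod 2) : Matrix (ZMod 2) (ZMod 2) ℂ :=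
  fun a b => (-Complex.I) ^ (z.val * x.val) *
    (if a = b + x then (-1 : ℂ) ^ (z.val * a.val) else 0)

/-- The binary-vector encoding of `n`-qubit Pauli strings. -/
noncomputable def pauliEnc (n : ℕ) (b : (Fin n → ZMod 2) × (Fin n → ZMod 2)) :
    Matrix (Fin n → ZMod 2) (Fin n → ZMod 2) ℂ :=
  fun k l => ∏ m : Fin n, singleZX (b.1 m) (b.2 m) (k m) (l m)

/-- The set `{I, X, Y, Z}^{⊗n}` of `n`-qubit Pauli strings. -/
noncomputable def PauliStrings (n : ℕ) :
    Set (Matrix (Fin n → ZMod 2) (Fin n → ZMod 2) ℂ) :=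
  {M | ∃ f : Fin n → Matrix (ZMod 2) (ZMod 2) ℂ,
    (∀ m, f m = 1 ∨ f m = pauliX ∨ f m = pauliY ∨ f m = pauliZ) ∧
    ∀ k l, M k l = ∏ m : Fin n, f m (k m) (l m)}

/-- The set `{I, Z}^{⊗n}` of diagonal `n`-qubit Pauli strings. -/
noncomputable def DiagPauliStrings (n : ℕ) :
    Set (Matrix (Fin n → ZMod 2) (Fin n → ZMod 2) ℂ) :=
  Set.range (fun s : Fin n → ZMod 2 => pauliEnc n (s, 0))

section Aux

set_option maxHeartbeats 1000000

/-- The scalar appearing when multiplying two single-qubit operators. -/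
noncomputable def c1 (z x z' x' : ZMod 2) : ℂ :=
  (-1 : ℂ) ^ (z'.val * x.val) * (-Complex.I) ^ (z.val * x.val) *
    (-Complex.I) ^ (z'.val * x'.val) * (Complex.I) ^ ((z + z').val * ((x + x').val))

lemma v0 : (0 : ZMod 2).val = 0 := rfl
lemma v1 : (1 : ZMod 2).val = 1 := rfl
lemma two0 : (2 : ZMod 2) = 0 := by decide
lemma v2 : (2 : ZMod 2).val = 0 := by decide
lemma h11 : (1 : ZMod 2) + 1 = 0 := by decide
lemma zmod2_cases : ∀ a : ZMod 2, a = 0 ∨ a = 1 := by decide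
lemma zmod2_add_eq_zero : ∀ a b : ZMod 2, a + b = 0 → a = b := by decide

lemma singleZX_mul (z x z' x' : ZMod 2) :
    singleZX z x * singleZX z' x' = c1 z x z' x' • singleZX (z + z') (x + x') := by
  rcases zmod2_cases z with rfl | rfl <;> rcases zmod2_cases x with rfl | rfl <;>
    rcases zmod2_cases z' with rfl | rfl <;> rcases zmod2_cases x' with rfl | rfl <;>
    ext a b <;> rcases zmod2_cases a with rfl | rfl <;> rcases zmod2_cases b with rfl | rfl <;>
      simp (config := { decide := true }) [singleZX, c1, Matrix.mul_apply,
        Fin.sum_univ_two, v0, v1, v2, two0, h11, Matrix.smul_apply, smul_eq_mul] <;>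
      (try norm_num [Complex.I_sq]) <;> (try ring)

lemma c1_ne_zero (z x z' x' : ZMod 2) : c1 z x z' x' ≠ 0 := by
  fin_cases z <;> fin_cases x <;> fin_cases z' <;> fin_cases x' <;>
    norm_num [c1, v0, v1, v2, two0, h11, Complex.I_ne_zero]

lemma c1_swap (z x z' x' : ZMod 2) :
    c1 z x z' x' = (-1 : ℂ) ^ (z.val * x'.val + z'.val * x.val) * c1 z' x' z x := by
  rcases zmod2_cases z with rfl | rfl <;> rcases zmod2_cases x with rfl | rfl <;>
    rcases zmod2_cases z' with rfl | rfl <;> rcases zmod2_cases x' with rfl | rfl <;>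
    norm_num [c1, v0, v1, v2, two0, h11, Complex.I_sq] <;> try ring

lemma c1_self (z x : ZMod 2) : c1 z x z x = 1 := by
  rcases zmod2_cases z with rfl | rfl <;> rcases zmod2_cases x with rfl | rfl <;>
    norm_num [c1, v0, v1, v2, two0, h11, Complex.I_sq]

/-- The global scalar for multiplying Pauli strings. -/
noncomputable def cc {n : ℕ} (u v : (Fin n → ZMod 2) × (Fin n → ZMod 2)) : ℂ :=
  ∏ m : Fin n, c1 (u.1 m) (u.2 m) (v.1 m) (v.2 m)

lemma pauliEnc_mul (n : ℕ) (u v : (Fin n → ZMod 2) × (Fin n → ZMod 2)) :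
    pauliEnc n u * pauliEnc n v = cc u v • pauliEnc n (u + v) := by
  ext k l
  rw [Matrix.mul_apply]
  calc ∑ j, pauliEnc n u k j * pauliEnc n v j l
      = ∑ j : Fin n → ZMod 2, ∏ m,
          (singleZX (u.1 m) (u.2 m) (k m) (j m) * singleZX (v.1 m) (v.2 m) (j m) (l m)) := by
        simp only [pauliEnc, Finset.prod_mul_distrib]
    _ = ∏ m, ∑ c : ZMod 2, singleZX (u.1 m) (u.2 m) (k m) c * singleZX (v.1 m) (v.2 m) c (l m) :=
        (Fintype.prod_sum (fun m c => singleZX (u.1 m) (u.2 m) (k m) c *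
          singleZX (v.1 m) (v.2 m) c (l m))).symm
    _ = ∏ m, (singleZX (u.1 m) (u.2 m) * singleZX (v.1 m) (v.2 m)) (k m) (l m) := by
        simp [Matrix.mul_apply]
    _ = ∏ m, (c1 (u.1 m) (u.2 m) (v.1 m) (v.2 m) •
          singleZX (u.1 m + v.1 m) (u.2 m + v.2 m)) (k m) (l m) := by
        simp_rw [singleZX_mul]
    _ = (cc u v • pauliEnc n (u + v)) k l := by
        simp [cc, pauliEnc, Finset.prod_mul_distrib]

lemma singleZX_x_zero_ne (z x : ZMod 2) : singleZX z x x 0 ≠ 0 := by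
  have : x = 0 + x := (zero_add x).symm
  simp only [singleZX, if_pos this]
  exact mul_ne_zero (pow_ne_zero _ (neg_ne_zero.mpr Complex.I_ne_zero))
    (pow_ne_zero _ (by norm_num))

lemma cc_ne_zero {n : ℕ} (u v : (Fin n → ZMod 2) × (Fin n → ZMod 2)) : cc u v ≠ 0 :=
  Finset.prod_ne_zero_iff.mpr fun m _ => c1_ne_zero _ _ _ _

lemma cc_self {n : ℕ} (u : (Fin n → ZMod 2) × (Fin n → ZMod 2)) : cc u u = 1 := by
  simp [cc, c1_self]

lemma pauliEnc_entry_ne_zero (n : ℕ) (w : (Fin n → ZMod 2) × (Fin n → ZMod 2)) :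
    pauliEnc n w w.2 0 ≠ 0 := by
  exact Finset.prod_ne_zero_iff.mpr fun m _ => by
    simpa using singleZX_x_zero_ne (w.1 m) (w.2 m)

lemma pauliEnc_zero (n : ℕ) : pauliEnc n 0 = 1 := by
  ext k l
  simp only [pauliEnc, singleZX, Matrix.one_apply]
  by_cases h : k = l
  · subst h; simp
  · obtain ⟨m, hm⟩ := Function.ne_iff.mp h
    rw [if_neg h]
    refine Finset.prod_eq_zero (Finset.mem_univ m) ?_
    simp [hm]

lemma pauliEnc_smul_one (n : ℕ) (w : (Fin n → ZMod 2) × (Fin n → ZMod 2)) (d : ℂ)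
    (h : pauliEnc n w = d • 1) : w = 0 := by
  have hx : w.2 = 0 := by
    by_contra hx
    obtain ⟨m, hm⟩ := Function.ne_iff.mp hx
    have h1 := pauliEnc_entry_ne_zero n w
    rw [h] at h1
    have : (1 : Matrix (Fin n → ZMod 2) (Fin n → ZMod 2) ℂ) w.2 0 = 0 := by
      rw [Matrix.one_apply, if_neg hx]
    simp [Matrix.smul_apply, this] at h1
  have hd : d = 1 := by
    have h0 := congrFun (congrFun h 0) 0
    simp only [pauliEnc, Matrix.smul_apply, Matrix.one_apply_eq, smul_eq_mul, mul_one] at h0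
    rw [← h0]
    refine Finset.prod_eq_one fun m _ => ?_
    have : w.2 m = 0 := by rw [hx]; rfl
    simp [singleZX, this, Pi.zero_apply]
  have hz : w.1 = 0 := by
    by_contra hz
    obtain ⟨m, hm⟩ := Function.ne_iff.mp hz
    have hm1 : w.1 m = 1 := (zmod2_cases (w.1 m)).resolve_left (by simpa using hm)
    set k : Fin n → ZMod 2 := Pi.single m 1 with hk
    have h0 := congrFun (congrFun h k) k
    rw [hd] at h0
    simp only [pauliEnc, Matrix.smul_apply, Matrix.one_apply_eq, one_smul] at h0
    have : ∏ m' : Fin n, singleZX (w.1 m') (w.2 m') (k m') (k m') = -1 := by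
      rw [Finset.prod_eq_single m]
      · have : w.2 m = 0 := by rw [hx]; rfl
        simp [singleZX, this, hm1, hk, Pi.single_eq_same, v1]
      · intro m' _ hne
        have h2 : w.2 m' = 0 := by rw [hx]; rfl
        have hk' : k m' = 0 := Pi.single_eq_of_ne hne 1
        simp [singleZX, h2, hk']
      · simp
    rw [this] at h0
    norm_num at h0
  exact Prod.ext hz hx

lemma pauliEnc_injective (n : ℕ) : Function.Injective (pauliEnc n) := by
  intro u v h
  have hmul := pauliEnc_mul n u v
  rw [h, pauliEnc_mul n v v, cc_self] at hmul
  have hvv : v + v = 0 := by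
    ext m <;> simp [CharTwo.add_self_eq_zero]
  rw [hvv, pauliEnc_zero, one_smul] at hmul
  have huv : pauliEnc n (u + v) = (cc u v)⁻¹ • 1 := by
    rw [hmul, inv_smul_smul₀ (cc_ne_zero u v)]
  have h0 : u + v = 0 := pauliEnc_smul_one n (u + v) _ huv
  have := congrArg (· + v) h0
  simpa [add_assoc, hvv] using this

/-- `Commute` implies the symplectic form vanishes. -/
lemma commute_symplectic (n : ℕ) (u v : (Fin n → ZMod 2) × (Fin n → ZMod 2))
    (h : Commute (pauliEnc n u) (pauliEnc n v)) :
    ∑ m : Fin n, (u.1 m * v.2 m + u.2 m * v.1 m) = 0 := by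
  have h1 : cc u v • pauliEnc n (u + v) = cc v u • pauliEnc n (u + v) := by
    have := h
    unfold Commute SemiconjBy at this
    rw [pauliEnc_mul, pauliEnc_mul, add_comm v u] at this
    exact this
  have h2 : cc u v = cc v u := by
    have := congrFun (congrFun h1 (u + v).2) 0
    simp only [Matrix.smul_apply, smul_eq_mul] at this
    exact mul_right_cancel₀ (pauliEnc_entry_ne_zero n (u + v)) this
  have h3 : cc u v = (-1 : ℂ) ^ (∑ m : Fin n, ((u.1 m).val * (v.2 m).val
      + (v.1 m).val * (u.2 m).val)) * cc v u := by
    rw [← Finset.prod_pow_eq_pow_sum]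
    simp only [cc]
    rw [← Finset.prod_mul_distrib]
    exact Finset.prod_congr rfl fun m _ => c1_swap _ _ _ _
  rw [h2] at h3
  have h4 : ((-1 : ℂ)) ^ (∑ m : Fin n, ((u.1 m).val * (v.2 m).val
      + (v.1 m).val * (u.2 m).val)) = 1 := by
    have := mul_right_cancel₀ (cc_ne_zero v u) (h3.symm.trans (one_mul (cc v u)).symm)
    rw [this]
  have h5 : Even (∑ m : Fin n, ((u.1 m).val * (v.2 m).val + (v.1 m).val * (u.2 m).val)) := by
    rcases Nat.even_or_odd _ with he | ho
    · exact he
    · rw [Odd.neg_one_pow ho] at h4; norm_num at h4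
  have h6 : ((∑ m : Fin n, ((u.1 m).val * (v.2 m).val + (v.1 m).val * (u.2 m).val) : ℕ) :
      ZMod 2) = 0 := by
    rw [ZMod.natCast_eq_zero_iff]
    exact h5.two_dvd
  rw [Nat.cast_sum] at h6
  rw [← h6]
  refine Finset.sum_congr rfl fun m _ => ?_
  push_cast
  rw [ZMod.natCast_val, ZMod.natCast_val, ZMod.natCast_val, ZMod.natCast_val,
    ZMod.cast_id, ZMod.cast_id, ZMod.cast_id, ZMod.cast_id]
  ring

lemma single00 : singleZX 0 0 = 1 := by
  ext a b
  rcases zmod2_cases a with rfl | rfl <;> rcases zmod2_cases b with rfl | rfl <;>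
    norm_num [singleZX, Matrix.one_apply, v0, v1, h11, two0]
lemma single01 : singleZX 0 1 = pauliX := by
  ext a b
  rcases zmod2_cases a with rfl | rfl <;> rcases zmod2_cases b with rfl | rfl <;>
    norm_num [singleZX, pauliX, v0, v1, h11, two0]
lemma single11 : singleZX 1 1 = pauliY := by
  ext a b
  rcases zmod2_cases a with rfl | rfl <;> rcases zmod2_cases b with rfl | rfl <;>
    norm_num [singleZX, pauliY, v0, v1, h11, two0] <;> simp [two0]
lemma single10 : singleZX 1 0 = pauliZ := by
  ext a b
  rcases zmod2_cases a with rfl | rfl <;> rcases zmod2_cases b with rfl | rfl <;>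
    norm_num [singleZX, pauliZ, v0, v1, h11, two0]

lemma pauliStrings_sub_range (n : ℕ) : PauliStrings n ⊆ Set.range (pauliEnc n) := by
  rintro M ⟨f, hf, hM⟩
  have : ∀ m, ∃ z x : ZMod 2, f m = singleZX z x := by
    intro m
    rcases hf m with h | h | h | h
    · exact ⟨0, 0, by rw [h, single00]⟩
    · exact ⟨0, 1, by rw [h, single01]⟩
    · exact ⟨1, 1, by rw [h, single11]⟩
    · exact ⟨1, 0, by rw [h, single10]⟩
  choose z x hzx using this
  refine ⟨(z, x), ?_⟩
  ext k l
  rw [hM k l, pauliEnc]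
  exact (Finset.prod_congr rfl fun m _ => by rw [hzx m]).symm

/-- The symplectic bilinear form. -/
noncomputable def Bf (n : ℕ) : ((Fin n → ZMod 2) × (Fin n → ZMod 2)) →ₗ[ZMod 2]
    ((Fin n → ZMod 2) × (Fin n → ZMod 2)) →ₗ[ZMod 2] ZMod 2 :=
  LinearMap.mk₂ (ZMod 2) (fun u v => ∑ m, (u.1 m * v.2 m + u.2 m * v.1 m))
    (fun u u' v => by
      rw [← Finset.sum_add_distrib]
      exact Finset.sum_congr rfl fun m _ => by
        simp only [Prod.fst_add, Prod.snd_add, Pi.add_apply]; ring)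
    (fun c u v => by
      simp only [smul_eq_mul]
      rw [Finset.mul_sum]
      exact Finset.sum_congr rfl fun m _ => by
        simp only [Prod.smul_fst, Prod.smul_snd, Pi.smul_apply, smul_eq_mul]; ring)
    (fun u v v' => by
      rw [← Finset.sum_add_distrib]
      exact Finset.sum_congr rfl fun m _ => by
        simp only [Prod.fst_add, Prod.snd_add, Pi.add_apply]; ring)
    (fun c u v => by
      simp only [smul_eq_mul]
      rw [Finset.mul_sum]
      exact Finset.sum_congr rfl fun m _ => by
        simp only [Prod.smul_fst, Prod.smul_snd, Pi.smul_apply, smul_eq_mul]; ring)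

lemma Bf_apply (n : ℕ) (u v : (Fin n → ZMod 2) × (Fin n → ZMod 2)) :
    Bf n u v = ∑ m, (u.1 m * v.2 m + u.2 m * v.1 m) := rfl

lemma Bf_injective (n : ℕ) : Function.Injective (Bf n) := by
  rw [← LinearMap.ker_eq_bot]
  rw [eq_bot_iff]
  intro u hu
  rw [LinearMap.mem_ker] at hu
  have h1 : ∀ v, Bf n u v = 0 := fun v => by rw [hu]; rfl
  have hz : ∀ i, u.1 i = 0 := by
    intro i
    have := h1 (0, Pi.single i 1)
    simpa [Bf_apply, Pi.single_apply, Finset.sum_ite_eq'] using this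
  have hx : ∀ i, u.2 i = 0 := by
    intro i
    have := h1 (Pi.single i 1, 0)
    simpa [Bf_apply, Pi.single_apply, Finset.sum_ite_eq'] using this
  have : u = 0 := Prod.ext (funext hz) (funext hx)
  simp [this]

lemma finrank_M (n : ℕ) :
    Module.finrank (ZMod 2) ((Fin n → ZMod 2) × (Fin n → ZMod 2)) = 2 * n := by
  have h := Module.card_eq_pow_finrank (K := ZMod 2) (V := (Fin n → ZMod 2) × (Fin n → ZMod 2))
  have hc : Fintype.card ((Fin n → ZMod 2) × (Fin n → ZMod 2)) = 2 ^ (2 * n) := by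
    simp [Fintype.card_prod, Fintype.card_fun, ZMod.card]
    ring
  rw [hc, ZMod.card] at h
  exact (Nat.pow_right_injective (le_refl 2) h).symm

lemma span_card_le (n : ℕ) (S : Set ((Fin n → ZMod 2) × (Fin n → ZMod 2)))
    (hS : ∀ u ∈ S, ∀ v ∈ S, Bf n u v = 0) :
    Nat.card (Submodule.span (ZMod 2) S) ≤ 2 ^ n := by
  set V := Submodule.span (ZMod 2) S with hV
  have hsurj : Function.Surjective (Bf n) :=
    (LinearMap.injective_iff_surjective_of_finrank_eq_finrank
      (Subspace.dual_finrank_eq (V := (Fin n → ZMod 2) × (Fin n → ZMod 2))).symm).mp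
      (Bf_injective n)
  set e := LinearEquiv.ofBijective (Bf n) ⟨Bf_injective n, hsurj⟩ with he
  have hVK : V ≤ (V.dualAnnihilator).comap (Bf n) := by
    rw [hV, Submodule.span_le]
    intro s hs
    simp only [Set.mem_preimage, SetLike.mem_coe, Submodule.mem_comap,
      Submodule.mem_dualAnnihilator]
    intro w hw
    have hker : V ≤ LinearMap.ker (Bf n s) := by
      rw [hV, Submodule.span_le]
      intro t ht
      exact LinearMap.mem_ker.mpr (hS s hs t ht)
    exact hker hw
  have hcomap : (V.dualAnnihilator).comap (Bf n) =
      (V.dualAnnihilator).map (e.symm : _ →ₗ[ZMod 2] _) := by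
    have h := Submodule.comap_equiv_eq_map_symm e V.dualAnnihilator
    exact h
  have h2 : Module.finrank (ZMod 2) V +
      Module.finrank (ZMod 2) V.dualAnnihilator =
      Module.finrank (ZMod 2) ((Fin n → ZMod 2) × (Fin n → ZMod 2)) := by
    have eq1 := Submodule.finrank_quotient_add_finrank V
    have eq2 : Module.finrank (ZMod 2) (((Fin n → ZMod 2) × (Fin n → ZMod 2)) ⧸ V) =
        Module.finrank (ZMod 2) V.dualAnnihilator :=
      (Subspace.quotEquivAnnihilator V).finrank_eq
    omega
  have h3 : Module.finrank (ZMod 2) V ≤ Module.finrank (ZMod 2) V.dualAnnihilator := by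
    calc Module.finrank (ZMod 2) V
        ≤ Module.finrank (ZMod 2) ((V.dualAnnihilator).comap (Bf n)) :=
          Submodule.finrank_mono hVK
      _ = Module.finrank (ZMod 2) V.dualAnnihilator := by
          rw [hcomap]
          exact LinearEquiv.finrank_map_eq e.symm V.dualAnnihilator
  have h4 : Module.finrank (ZMod 2) V ≤ n := by
    rw [finrank_M] at h2; omega
  haveI : Fintype V := Fintype.ofFinite _
  rw [Nat.card_eq_fintype_card, Module.card_eq_pow_finrank (K := ZMod 2), ZMod.card]
  exact Nat.pow_le_pow_right (by norm_num) h4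

/-- Part (1) as a standalone lemma (no commutation needed). -/
lemma part1 (n : ℕ) (u v : (Fin n → ZMod 2) × (Fin n → ZMod 2))
    (hne : u ≠ v) (hx : u.2 = v.2) :
    pauliEnc n (u + v) ∈ DiagPauliStrings n ∧
      pauliEnc n (u + v) ≠ (1 : Matrix (Fin n → ZMod 2) (Fin n → ZMod 2) ℂ) := by
  have hx2 : (u + v).2 = 0 := by
    funext m
    have : u.2 m + v.2 m = 0 := by rw [hx]; exact CharTwo.add_self_eq_zero _
    simpa using this
  have huv : u + v = ((u + v).1, 0) := Prod.ext rfl hx2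
  constructor
  · refine ⟨(u + v).1, ?_⟩
    show pauliEnc n ((u + v).1, 0) = pauliEnc n (u + v)
    rw [← huv]
  · intro h1
    have h0 : u + v = 0 := pauliEnc_smul_one n (u + v) 1 (by rw [h1, one_smul])
    apply hne
    exact Prod.ext
      (funext fun m => zmod2_add_eq_zero _ _ (by simpa using congrFun (congrArg Prod.fst h0) m))
      (funext fun m => zmod2_add_eq_zero _ _ (by simpa using congrFun (congrArg Prod.snd h0) m))

end Aux

/-- (1) If two distinct commuting Pauli strings `φ(u) ≠ φ(v)` have the same X-part
(`uˣ = vˣ`), then `φ(u ⊕ v)` is a nonidentity element of `{I,Z}^{⊗n}`.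
(2) Consequently, if a maximally commuting family `G` (containing `I^{⊗n}`,
`|G| = 2ⁿ`) is disjoint from `{I,Z}^{⊗n}∖{I^{⊗n}}`, then `u ↦ uˣ` restricted to
`φ⁻¹(G)` is a bijection onto `{0,1}ⁿ`. -/
theorem same_x_part_and_x_part_bijection (n : ℕ) :
    (∀ u v : (Fin n → ZMod 2) × (Fin n → ZMod 2),
      Commute (pauliEnc n u) (pauliEnc n v) → u ≠ v → u.2 = v.2 →
        pauliEnc n (u + v) ∈ DiagPauliStrings n ∧
        pauliEnc n (u + v) ≠ (1 : Matrix (Fin n → ZMod 2) (Fin n → ZMod 2) ℂ)) ∧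
    (∀ G : Set (Matrix (Fin n → ZMod 2) (Fin n → ZMod 2) ℂ),
      G ⊆ PauliStrings n →
      (1 : Matrix (Fin n → ZMod 2) (Fin n → ZMod 2) ℂ) ∈ G →
      (∀ P ∈ G, ∀ Q ∈ G, Commute P Q) →
      G.ncard = 2 ^ n →
      G ∩ (DiagPauliStrings n \ {(1 : Matrix (Fin n → ZMod 2) (Fin n → ZMod 2) ℂ)}) = ∅ →
      Set.BijOn (fun u : (Fin n → ZMod 2) × (Fin n → ZMod 2) => u.2)
        (pauliEnc n ⁻¹' G) Set.univ) := by
  constructor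
  · intro u v _ hne hx
    exact part1 n u v hne hx
  · intro G hGP hG1 hGcomm hGcard hGdiag
    set S : Set ((Fin n → ZMod 2) × (Fin n → ZMod 2)) := pauliEnc n ⁻¹' G with hSdef
    have hSG : pauliEnc n '' S = G :=
      Set.image_preimage_eq_of_subset (fun M hM => pauliStrings_sub_range n (hGP hM))
    have hScard : S.ncard = 2 ^ n := by
      rw [← hGcard, ← hSG, Set.ncard_image_of_injective _ (pauliEnc_injective n)]
    have hBS : ∀ u ∈ S, ∀ v ∈ S, Bf n u v = 0 := by
      intro u hu v hv
      have := commute_symplectic n u v (hGcomm _ hu _ hv)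
      rw [Bf_apply]
      exact this
    set V := Submodule.span (ZMod 2) S with hV
    have hSV : S = (V : Set ((Fin n → ZMod 2) × (Fin n → ZMod 2))) := by
      apply Set.eq_of_subset_of_ncard_le Submodule.subset_span
      rw [hScard]
      rw [← Nat.card_coe_set_eq]
      exact span_card_le n S hBS
    have hclosed : ∀ u ∈ S, ∀ v ∈ S, u + v ∈ S := by
      intro u hu v hv
      rw [hSV] at hu hv ⊢
      exact V.add_mem hu hv
    have hinj : Set.InjOn (fun u : (Fin n → ZMod 2) × (Fin n → ZMod 2) => u.2) S := by
      intro u hu v hv hxy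
      by_contra hne
      have hw : u + v ∈ S := hclosed u hu v hv
      have h1 := part1 n u v hne hxy
      have hmem : pauliEnc n (u + v) ∈ G ∩
          (DiagPauliStrings n \ {(1 : Matrix (Fin n → ZMod 2) (Fin n → ZMod 2) ℂ)}) :=
        ⟨hw, h1.1, h1.2⟩
      rw [hGdiag] at hmem
      exact hmem
    refine ⟨fun u _ => trivial, hinj, ?_⟩
    have hT : ((fun u : (Fin n → ZMod 2) × (Fin n → ZMod 2) => u.2) '' S) = Set.univ := by
      apply Set.eq_of_subset_of_ncard_le (Set.subset_univ _)
      rw [Set.ncard_image_of_injOn hinj, hScard, Set.ncard_univ]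
      have : Nat.card (Fin n → ZMod 2) = 2 ^ n := by
        simp [Nat.card_eq_fintype_card, Fintype.card_fun, ZMod.card]
      rw [this]
    intro x _
    rw [hT]
    trivial
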